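/- Let the sequences {w^k} and {w̃^k} be generated by GS-ADMM with τ + s > 0. Then for every k and every w ∈ M: h(u) − h(ũ^k) + ⟨w − w̃^k, J(w)⟩ ≥ (1/2)(‖w − w^{k+1}‖_H² − ‖w − w^k‖_H²) + (1/2)‖w^k − w̃^k‖_G². -/

import Mathlib

/-!
Each block subproblem minimizes a convex function plus a quadratic in `A_i x_i`, so its minimizer
satisfies a variational inequality. Summed over the blocks, these give
`h(u) − h(ũ^k) + ⟨w − w̃^k, J(w̃^k)⟩ ≥ ⟨w − w̃^k, Q(w^k − w̃^k)⟩` for a block matrix `Q`, and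
`J(w̃^k)` may be replaced by `J(w)` because `J` is affine with skew-symmetric linear part. The
right-hand side then splits by three-point identities
`⟨a − b, c − b⟩_D = ½(‖a − b‖²_D − ‖a − c‖²_D + ‖c − b‖²_D)` for the block forms `Hyform A β σ1`
and `Hyform B β σ2`, and by an explicit identity in `(By, λ)` that uses the multiplier updates.
-/

open scoped RealInnerProductSpace
open Matrix Filter

/-- Multiplication of a matrix with a vector, viewed as a map between Euclidean spaces. -/
noncomputable def mv {n m : ℕ} (M : Matrix (Fin n) (Fin m) ℝ)
    (v : EuclideanSpace ℝ (Fin m)) : EuclideanSpace ℝ (Fin n) :=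
  WithLp.toLp 2 (M.mulVec v)

/-- `sA A x = Σ_i A_i x_i`. -/
noncomputable def sA {p n : ℕ} {m : Fin p → ℕ}
    (A : ∀ i, Matrix (Fin n) (Fin (m i)) ℝ)
    (x : ∀ i, EuclideanSpace ℝ (Fin (m i))) : EuclideanSpace ℝ (Fin n) :=
  ∑ i, mv (A i) (x i)

/-- The augmented Lagrangian
`L_β(x,y,λ) = Σ_i f_i(x_i) + Σ_j g_j(y_j) − ⟨λ, Ax + By − c⟩ + (β/2)‖Ax + By − c‖²`. -/
noncomputable def Lag {p q n : ℕ} {m : Fin p → ℕ} {d : Fin q → ℕ}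
    (A : ∀ i, Matrix (Fin n) (Fin (m i)) ℝ)
    (B : ∀ j, Matrix (Fin n) (Fin (d j)) ℝ)
    (c : EuclideanSpace ℝ (Fin n))
    (f : ∀ i, EuclideanSpace ℝ (Fin (m i)) → ℝ)
    (g : ∀ j, EuclideanSpace ℝ (Fin (d j)) → ℝ)
    (β : ℝ)
    (x : ∀ i, EuclideanSpace ℝ (Fin (m i)))
    (y : ∀ j, EuclideanSpace ℝ (Fin (d j)))
    (lam : EuclideanSpace ℝ (Fin n)) : ℝ :=
  (∑ i, f i (x i)) + (∑ j, g j (y j)) - ⟪lam, sA A x + sA B y - c⟫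
    + β / 2 * ‖sA A x + sA B y - c‖ ^ 2

/-- The `H`-quadratic form `‖(x,y,λ)‖_H²`. -/
noncomputable def Hform {p q n : ℕ} {m : Fin p → ℕ} {d : Fin q → ℕ}
    (A : ∀ i, Matrix (Fin n) (Fin (m i)) ℝ)
    (B : ∀ j, Matrix (Fin n) (Fin (d j)) ℝ)
    (β σ1 σ2 τ s : ℝ)
    (x : ∀ i, EuclideanSpace ℝ (Fin (m i)))
    (y : ∀ j, EuclideanSpace ℝ (Fin (d j)))
    (lam : EuclideanSpace ℝ (Fin n)) : ℝ :=
  β * ((σ1 + 1) * (∑ i, ‖mv (A i) (x i)‖ ^ 2) - ‖sA A x‖ ^ 2)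
    + (σ2 + 1) * β * (∑ j, ‖mv (B j) (y j)‖ ^ 2)
    - τ * s / (τ + s) * β * ‖sA B y‖ ^ 2
    - 2 * τ / (τ + s) * ⟪sA B y, lam⟫
    + 1 / (β * (τ + s)) * ‖lam‖ ^ 2

/-- The `G`-quadratic form `‖(x,y,λ)‖_G²`. -/
noncomputable def Gform {p q n : ℕ} {m : Fin p → ℕ} {d : Fin q → ℕ}
    (A : ∀ i, Matrix (Fin n) (Fin (m i)) ℝ)
    (B : ∀ j, Matrix (Fin n) (Fin (d j)) ℝ)
    (β σ1 σ2 τ s : ℝ)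
    (x : ∀ i, EuclideanSpace ℝ (Fin (m i)))
    (y : ∀ j, EuclideanSpace ℝ (Fin (d j)))
    (lam : EuclideanSpace ℝ (Fin n)) : ℝ :=
  β * ((σ1 + 1) * (∑ i, ‖mv (A i) (x i)‖ ^ 2) - ‖sA A x‖ ^ 2)
    + (σ2 + 1) * β * (∑ j, ‖mv (B j) (y j)‖ ^ 2)
    - s * β * ‖sA B y‖ ^ 2
    + 2 * (s - 1) * ⟪sA B y, lam⟫
    + (2 - τ - s) / β * ‖lam‖ ^ 2

/-- The `H_y`-quadratic form `‖y‖_{H_y}² = β[(σ₂+1)Σ_j‖B_j y_j‖² − ‖By‖²]`. -/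
noncomputable def Hyform {q n : ℕ} {d : Fin q → ℕ}
    (B : ∀ j, Matrix (Fin n) (Fin (d j)) ℝ)
    (β σ2 : ℝ)
    (y : ∀ j, EuclideanSpace ℝ (Fin (d j))) : ℝ :=
  β * ((σ2 + 1) * (∑ j, ‖mv (B j) (y j)‖ ^ 2) - ‖sA B y‖ ^ 2)

theorem Finset.sum_apply_update {ι M : Type*} [Fintype ι] [DecidableEq ι] [AddCommGroup M]
    {α : ι → Type*} (F : ∀ i, α i → M) (x : ∀ i, α i) (i : ι) (z : α i) :
    ∑ j, F j (Function.update x i z j) = ∑ j, F j (x j) - F i (x i) + F i z := by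
  simp_rw [Function.apply_update]
  rw [Finset.sum_update_of_mem (Finset.mem_univ i), ← Finset.sum_erase_add _ _ (Finset.mem_univ i),
    Finset.sdiff_singleton_eq_erase]
  abel

lemma nonneg_of_forall_mul_add_sq_mul_nonneg {a c : ℝ}
    (h : ∀ t ∈ Set.Ioc (0 : ℝ) 1, 0 ≤ t * a + t ^ 2 * c) : 0 ≤ a := by
  have hlim : Tendsto (fun t : ℝ => a + t * c) (nhdsWithin 0 (Set.Ioi 0)) (nhds a) := by
    have : Continuous (fun t : ℝ => a + t * c) := by fun_prop
    simpa using (this.tendsto 0).mono_left nhdsWithin_le_nhds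
  refine ge_of_tendsto hlim ?_
  filter_upwards [Ioc_mem_nhdsGT one_pos] with t ht
  exact nonneg_of_mul_nonneg_right (by nlinarith [h t ht]) ht.1

section Optimality

variable {E F : Type*} [AddCommGroup E] [Module ℝ E] [NormedAddCommGroup F] [InnerProductSpace ℝ F]

lemma inner_add_sq_norm_add_smul (a w v : F) (κ t : ℝ) :
    ⟪a, w + t • v⟫ + κ / 2 * ‖w + t • v‖ ^ 2
      = ⟪a, w⟫ + κ / 2 * ‖w‖ ^ 2 + t * ⟪v, a + κ • w⟫ + t ^ 2 * (κ / 2 * ‖v‖ ^ 2) := by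
  simp only [← real_inner_self_eq_norm_sq, inner_add_left, inner_add_right,
    real_inner_smul_right, real_inner_comm]
  ring

theorem ConvexOn.sub_add_inner_nonneg_of_isMinOn {X : Set E} {f : E → ℝ} (hf : ConvexOn ℝ X f)
    (T : E →ₗ[ℝ] F) (a : F) (κ : ℝ) {u : E} (hu : u ∈ X)
    (hmin : IsMinOn (fun z => f z + ⟪a, T z⟫ + κ / 2 * ‖T z‖ ^ 2) X u) {z : E} (hz : z ∈ X) :
    0 ≤ f z - f u + ⟪T z - T u, a + κ • T u⟫ := by
  refine nonneg_of_forall_mul_add_sq_mul_nonneg (c := κ / 2 * ‖T z - T u‖ ^ 2) fun t ht => ?_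
  have hmem : u + t • (z - u) ∈ X := hf.1.add_smul_sub_mem hu hz ⟨ht.1.le, ht.2⟩
  have hconv : f (u + t • (z - u)) ≤ f u + t * (f z - f u) := by
    have h := hf.2 hu hz (sub_nonneg.2 ht.2) ht.1.le (sub_add_cancel 1 t)
    rw [show (1 - t) • u + t • z = u + t • (z - u) by module, smul_eq_mul, smul_eq_mul] at h
    linarith
  have hT : T (u + t • (z - u)) = T u + t • (T z - T u) := by
    rw [map_add, map_smul, map_sub]
  have hle := isMinOn_iff.1 hmin _ hmem
  rw [hT] at hle
  linarith [inner_add_sq_norm_add_smul a (T u) (T z - T u) κ t]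

end Optimality

lemma mv_eq_toEuclideanLin {n m : ℕ} (M : Matrix (Fin n) (Fin m) ℝ) :
    mv M = Matrix.toEuclideanLin M := rfl

lemma mv_sub {n m : ℕ} (M : Matrix (Fin n) (Fin m) ℝ) (a b : EuclideanSpace ℝ (Fin m)) :
    mv M (a - b) = mv M a - mv M b := by
  simp only [mv_eq_toEuclideanLin, map_sub]

lemma inner_mv_transpose {n m : ℕ} (M : Matrix (Fin n) (Fin m) ℝ)
    (z : EuclideanSpace ℝ (Fin m)) (w : EuclideanSpace ℝ (Fin n)) :
    ⟪z, mv Mᵀ w⟫ = ⟪mv M z, w⟫ := by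
  rw [mv_eq_toEuclideanLin, mv_eq_toEuclideanLin, ← Matrix.conjTranspose_eq_transpose_of_trivial,
    Matrix.toEuclideanLin_conjTranspose_eq_adjoint, LinearMap.adjoint_inner_right]

lemma sA_sub {p n : ℕ} {m : Fin p → ℕ} (A : ∀ i, Matrix (Fin n) (Fin (m i)) ℝ)
    (a b : ∀ i, EuclideanSpace ℝ (Fin (m i))) :
    sA A (fun i => a i - b i) = sA A a - sA A b := by
  simp only [sA, mv_sub, Finset.sum_sub_distrib]

lemma sA_update {p n : ℕ} {m : Fin p → ℕ} (A : ∀ i, Matrix (Fin n) (Fin (m i)) ℝ)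
    (x : ∀ i, EuclideanSpace ℝ (Fin (m i))) (i : Fin p) (z : EuclideanSpace ℝ (Fin (m i))) :
    sA A (Function.update x i z) = sA A x - mv (A i) (x i) + mv (A i) z :=
  Finset.sum_apply_update (fun j => mv (A j)) x i z

lemma sum_inner_neg_mv_transpose {p n : ℕ} {m : Fin p → ℕ}
    (A : ∀ i, Matrix (Fin n) (Fin (m i)) ℝ) (x : ∀ i, EuclideanSpace ℝ (Fin (m i)))
    (l : EuclideanSpace ℝ (Fin n)) :
    ∑ i, ⟪x i, -(mv (A i)ᵀ l)⟫ = -⟪sA A x, l⟫ := by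
  simp only [inner_neg_right, inner_mv_transpose, Finset.sum_neg_distrib, sA, sum_inner]

lemma Lag_comm {p q n : ℕ} {m : Fin p → ℕ} {d : Fin q → ℕ}
    (A : ∀ i, Matrix (Fin n) (Fin (m i)) ℝ) (B : ∀ j, Matrix (Fin n) (Fin (d j)) ℝ)
    (c : EuclideanSpace ℝ (Fin n)) (f : ∀ i, EuclideanSpace ℝ (Fin (m i)) → ℝ)
    (g : ∀ j, EuclideanSpace ℝ (Fin (d j)) → ℝ) (β : ℝ)
    (x : ∀ i, EuclideanSpace ℝ (Fin (m i))) (y : ∀ j, EuclideanSpace ℝ (Fin (d j)))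
    (lam : EuclideanSpace ℝ (Fin n)) :
    Lag A B c f g β x y lam = Lag B A c g f β y x lam := by
  simp only [Lag, add_comm (sA A x), add_comm (∑ i, f i (x i))]

noncomputable def HyInner {q n : ℕ} {d : Fin q → ℕ} (B : ∀ j, Matrix (Fin n) (Fin (d j)) ℝ)
    (β σ : ℝ) (u v : ∀ j, EuclideanSpace ℝ (Fin (d j))) : ℝ :=
  β * ((σ + 1) * ∑ j, ⟪mv (B j) (u j), mv (B j) (v j)⟫ - ⟪sA B u, sA B v⟫)

lemma Hyform_sub {q n : ℕ} {d : Fin q → ℕ} (B : ∀ j, Matrix (Fin n) (Fin (d j)) ℝ) (β σ : ℝ)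
    (u v : ∀ j, EuclideanSpace ℝ (Fin (d j))) :
    Hyform B β σ (fun j => u j - v j)
      = Hyform B β σ u - 2 * HyInner B β σ u v + Hyform B β σ v := by
  simp only [Hyform, HyInner, sA_sub, mv_sub, norm_sub_sq_real, Finset.sum_add_distrib,
    Finset.sum_sub_distrib, ← Finset.mul_sum]
  ring

lemma HyInner_three_point {q n : ℕ} {d : Fin q → ℕ} (B : ∀ j, Matrix (Fin n) (Fin (d j)) ℝ)
    (β σ : ℝ) (u v w : ∀ j, EuclideanSpace ℝ (Fin (d j))) :
    HyInner B β σ (fun j => u j - w j) (fun j => v j - w j)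
      = 1 / 2 * (Hyform B β σ (fun j => u j - w j) - Hyform B β σ (fun j => u j - v j))
        + 1 / 2 * Hyform B β σ (fun j => v j - w j) := by
  have h := Hyform_sub B β σ (fun j => u j - w j) (fun j => v j - w j)
  simp only [sub_sub_sub_cancel_right] at h
  linarith

section BlockStep

variable {p q n : ℕ} {m : Fin p → ℕ} {d : Fin q → ℕ}
  (A : ∀ i, Matrix (Fin n) (Fin (m i)) ℝ) (B : ∀ j, Matrix (Fin n) (Fin (d j)) ℝ)
  (c : EuclideanSpace ℝ (Fin n)) (f : ∀ i, EuclideanSpace ℝ (Fin (m i)) → ℝ)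
  (g : ∀ j, EuclideanSpace ℝ (Fin (d j)) → ℝ) (β σ : ℝ)

theorem Lag_update_add_prox_optimality (x : ∀ i, EuclideanSpace ℝ (Fin (m i)))
    (y : ∀ j, EuclideanSpace ℝ (Fin (d j))) (lam : EuclideanSpace ℝ (Fin n)) (i : Fin p)
    {X : Set (EuclideanSpace ℝ (Fin (m i)))} (hf : ConvexOn ℝ X (f i))
    {u : EuclideanSpace ℝ (Fin (m i))} (hu : u ∈ X)
    (hmin : ∀ z ∈ X,
      Lag A B c f g β (Function.update x i u) y lam + σ * β / 2 * ‖mv (A i) (u - x i)‖ ^ 2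
        ≤ Lag A B c f g β (Function.update x i z) y lam + σ * β / 2 * ‖mv (A i) (z - x i)‖ ^ 2)
    {z : EuclideanSpace ℝ (Fin (m i))} (hz : z ∈ X) :
    0 ≤ f i z - f i u + ⟪mv (A i) z - mv (A i) u,
      β • (sA A (Function.update x i u) + sA B y - c) - lam
        + (σ * β) • (mv (A i) u - mv (A i) (x i))⟫ := by
  set r := sA A x - mv (A i) (x i) + sA B y - c with hr
  set e := mv (A i) (x i) with he
  set a := β • r - lam - (σ * β) • e with ha
  have hexpand : ∀ z, Lag A B c f g β (Function.update x i z) y lam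
        + σ * β / 2 * ‖mv (A i) (z - x i)‖ ^ 2
      = f i z + ⟪a, mv (A i) z⟫ + (1 + σ) * β / 2 * ‖mv (A i) z‖ ^ 2
        + ((∑ j, f j (x j)) - f i (x i) + ∑ j, g j (y j) - ⟪lam, r⟫ + β / 2 * ‖r‖ ^ 2
          + σ * β / 2 * ‖e‖ ^ 2) := by
    intro z
    have hres : sA A (Function.update x i z) + sA B y - c = mv (A i) z + r := by
      rw [sA_update, hr]; abel
    rw [Lag, hres, Finset.sum_apply_update, mv_sub]
    simp only [ha, ← real_inner_self_eq_norm_sq, inner_add_left, inner_add_right, inner_sub_left,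
      inner_sub_right, real_inner_smul_right, real_inner_comm (mv (A i) z)]
    ring
  have hopt := hf.sub_add_inner_nonneg_of_isMinOn (Matrix.toEuclideanLin (A i)) a ((1 + σ) * β) hu
    (isMinOn_iff.2 fun z hz => by
      simp only [← mv_eq_toEuclideanLin]; linarith [hmin z hz, hexpand z, hexpand u]) hz
  simp only [← mv_eq_toEuclideanLin] at hopt
  convert hopt using 3
  rw [sA_update, ha, hr, he]
  module

theorem Lag_blockwise_step_inequality (x0 x1 xx : ∀ i, EuclideanSpace ℝ (Fin (m i)))
    (y : ∀ j, EuclideanSpace ℝ (Fin (d j))) (lam : EuclideanSpace ℝ (Fin n))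
    (X : ∀ i, Set (EuclideanSpace ℝ (Fin (m i)))) (hf : ∀ i, ConvexOn ℝ (X i) (f i))
    (hstep : ∀ i, x1 i ∈ X i ∧ ∀ z ∈ X i,
      Lag A B c f g β (Function.update x0 i (x1 i)) y lam
          + σ * β / 2 * ‖mv (A i) (x1 i - x0 i)‖ ^ 2
        ≤ Lag A B c f g β (Function.update x0 i z) y lam + σ * β / 2 * ‖mv (A i) (z - x0 i)‖ ^ 2)
    (hxx : ∀ i, xx i ∈ X i) :
    HyInner A β σ (fun i => xx i - x1 i) (fun i => x0 i - x1 i)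
      ≤ ∑ i, f i (xx i) - ∑ i, f i (x1 i)
        - ⟪sA A xx - sA A x1, lam - β • (sA A x1 + sA B y - c)⟫ := by
  set G := β • (sA A x1 + sA B y - c) - lam + β • (sA A x0 - sA A x1) with hG
  have hblock : ∀ i, 0 ≤ f i (xx i) - f i (x1 i)
      + ⟪mv (A i) (xx i - x1 i), G - ((1 + σ) * β) • mv (A i) (x0 i - x1 i)⟫ := by
    intro i
    convert Lag_update_add_prox_optimality A B c f g β σ x0 y lam i (hf i) (hstep i).1
      (hstep i).2 (hxx i) using 3
    · rw [mv_sub]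
    · rw [sA_update, hG, mv_sub]
      module
  have hsum := Finset.sum_nonneg fun i (_ : i ∈ Finset.univ) => hblock i
  simp only [Finset.sum_add_distrib, Finset.sum_sub_distrib, inner_sub_right,
    real_inner_smul_right, ← sum_inner, ← Finset.mul_sum] at hsum
  rw [show ∑ i, mv (A i) (xx i - x1 i) = sA A xx - sA A x1 from sA_sub A xx x1, hG] at hsum
  rw [HyInner, sA_sub, sA_sub]
  simp only [inner_add_right, inner_sub_right, real_inner_smul_right] at hsum ⊢
  linarith

end BlockStep

section Coupling

variable {F : Type*} [NormedAddCommGroup F] [InnerProductSpace ℝ F]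

noncomputable def Hcoupling (β τ s : ℝ) (v μ : F) : ℝ :=
  (1 - τ * s / (τ + s)) * β * ‖v‖ ^ 2 - 2 * τ / (τ + s) * ⟪v, μ⟫ + 1 / (β * (τ + s)) * ‖μ‖ ^ 2

noncomputable def Gcoupling (β τ s : ℝ) (v μ : F) : ℝ :=
  (1 - s) * β * ‖v‖ ^ 2 + 2 * (s - 1) * ⟪v, μ⟫ + (2 - τ - s) / β * ‖μ‖ ^ 2

-- The `(y, λ)`-rows of `⟨w − w̃, Q(w^k − w̃^k)⟩`: `P = By`, `Y0 = By^k`, `Y1 = By^{k+1}`, `L = λ`,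
-- `L0 = λ^k`, `Lh = λ^{k+1/2}`, `L1 = λ^{k+1}`, so that `L0 − β e = λ̃^k`.
theorem coupling_three_point {β τ s : ℝ} (hβ : β ≠ 0) (hτs : τ + s ≠ 0) (P Y0 Y1 L : F)
    {L0 Lh L1 e r : F} (hLh : Lh = L0 - (τ * β) • e) (hL1 : L1 = Lh - (s * β) • r)
    (hr : r = e - (Y0 - Y1)) :
    ⟪P - Y1, (Lh - β • r) - (L0 - β • e)⟫ + ⟪L - (L0 - β • e), r⟫
      = 1 / 2 * (Hcoupling β τ s (P - Y1) (L - L1) - Hcoupling β τ s (P - Y0) (L - L0))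
        + 1 / 2 * Gcoupling β τ s (Y0 - Y1) (β • e) := by
  subst hL1 hLh hr
  simp only [Hcoupling, Gcoupling, ← real_inner_self_eq_norm_sq, inner_sub_left, inner_sub_right,
    real_inner_smul_right, real_inner_comm]
  field_simp
  ring

-- `⟨w − w̃, J(w) − J(w̃)⟩ = 0`, with `u = A(x − x̃)` and `v = B(y − ỹ)`.
lemma inner_skew_cancel (u v r l t : F) :
    -⟪u, l⟫ + -⟪v, l⟫ + ⟪l - t, u + v + r⟫ = -⟪u, t⟫ - ⟪v, t⟫ + ⟪l - t, r⟫ := by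
  simp only [inner_add_right, inner_sub_left, real_inner_comm]
  ring

end Coupling

lemma Hform_eq {p q n : ℕ} {m : Fin p → ℕ} {d : Fin q → ℕ}
    (A : ∀ i, Matrix (Fin n) (Fin (m i)) ℝ) (B : ∀ j, Matrix (Fin n) (Fin (d j)) ℝ)
    (β σ1 σ2 τ s : ℝ) (x : ∀ i, EuclideanSpace ℝ (Fin (m i)))
    (y : ∀ j, EuclideanSpace ℝ (Fin (d j))) (lam : EuclideanSpace ℝ (Fin n)) :
    Hform A B β σ1 σ2 τ s x y lam
      = Hyform A β σ1 x + Hyform B β σ2 y + Hcoupling β τ s (sA B y) lam := by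
  simp only [Hform, Hyform, Hcoupling]
  ring

lemma Gform_eq {p q n : ℕ} {m : Fin p → ℕ} {d : Fin q → ℕ}
    (A : ∀ i, Matrix (Fin n) (Fin (m i)) ℝ) (B : ∀ j, Matrix (Fin n) (Fin (d j)) ℝ)
    (β σ1 σ2 τ s : ℝ) (x : ∀ i, EuclideanSpace ℝ (Fin (m i)))
    (y : ∀ j, EuclideanSpace ℝ (Fin (d j))) (lam : EuclideanSpace ℝ (Fin n)) :
    Gform A B β σ1 σ2 τ s x y lam
      = Hyform A β σ1 x + Hyform B β σ2 y + Gcoupling β τ s (sA B y) lam := by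
  simp only [Gform, Hyform, Gcoupling]
  ring

theorem stmt6_general
    {p q n : ℕ}
    {m : Fin p → ℕ} {d : Fin q → ℕ}
    (A : ∀ i, Matrix (Fin n) (Fin (m i)) ℝ)
    (B : ∀ j, Matrix (Fin n) (Fin (d j)) ℝ)
    (c : EuclideanSpace ℝ (Fin n))
    (X : ∀ i, Set (EuclideanSpace ℝ (Fin (m i))))
    (Y : ∀ j, Set (EuclideanSpace ℝ (Fin (d j))))
    (hXcv : ∀ i, Convex ℝ (X i))
    (hYcv : ∀ j, Convex ℝ (Y j))
    (f : ∀ i, EuclideanSpace ℝ (Fin (m i)) → ℝ)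
    (g : ∀ j, EuclideanSpace ℝ (Fin (d j)) → ℝ)
    (hf : ∀ i, ConvexOn ℝ Set.univ (f i))
    (hg : ∀ j, ConvexOn ℝ Set.univ (g j))
    (β σ1 σ2 τ s : ℝ) (hβ : 0 < β)
    (x : ℕ → ∀ i, EuclideanSpace ℝ (Fin (m i)))
    (y : ℕ → ∀ j, EuclideanSpace ℝ (Fin (d j)))
    (lam lamh : ℕ → EuclideanSpace ℝ (Fin n))
    (hxmin : ∀ k i, x (k+1) i ∈ X i ∧ ∀ z ∈ X i,
      Lag A B c f g β (Function.update (x k) i (x (k+1) i)) (y k) (lam k)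
          + σ1 * β / 2 * ‖mv (A i) (x (k+1) i - x k i)‖ ^ 2
        ≤ Lag A B c f g β (Function.update (x k) i z) (y k) (lam k)
          + σ1 * β / 2 * ‖mv (A i) (z - x k i)‖ ^ 2)
    (hlamh : ∀ k, lamh k = lam k - (τ * β) • (sA A (x (k+1)) + sA B (y k) - c))
    (hymin : ∀ k j, y (k+1) j ∈ Y j ∧ ∀ z ∈ Y j,
      Lag A B c f g β (x (k+1)) (Function.update (y k) j (y (k+1) j)) (lamh k)
          + σ2 * β / 2 * ‖mv (B j) (y (k+1) j - y k j)‖ ^ 2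
        ≤ Lag A B c f g β (x (k+1)) (Function.update (y k) j z) (lamh k)
          + σ2 * β / 2 * ‖mv (B j) (z - y k j)‖ ^ 2)
    (hlam : ∀ k, lam (k+1) = lamh k - (s * β) • (sA A (x (k+1)) + sA B (y (k+1)) - c))
    (hτs : 0 < τ + s) :
    ∀ k : ℕ,
      let tl : EuclideanSpace ℝ (Fin n) :=
        lam k - β • (sA A (x (k+1)) + sA B (y k) - c);
      ∀ (xx : ∀ i, EuclideanSpace ℝ (Fin (m i)))
        (yy : ∀ j, EuclideanSpace ℝ (Fin (d j)))
        (ll : EuclideanSpace ℝ (Fin n)),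
        (∀ i, xx i ∈ X i) → (∀ j, yy j ∈ Y j) →
        (∑ i, f i (xx i)) + (∑ j, g j (yy j))
            - ((∑ i, f i (x (k+1) i)) + (∑ j, g j (y (k+1) j)))
          + ((∑ i, ⟪xx i - x (k+1) i, -(mv (A i)ᵀ ll)⟫)
            + (∑ j, ⟪yy j - y (k+1) j, -(mv (B j)ᵀ ll)⟫)
            + ⟪ll - tl, sA A xx + sA B yy - c⟫)
        ≥ 1 / 2 *
            (Hform A B β σ1 σ2 τ s (fun i => xx i - x (k+1) i)
                (fun j => yy j - y (k+1) j) (ll - lam (k+1))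
              - Hform A B β σ1 σ2 τ s (fun i => xx i - x k i)
                (fun j => yy j - y k j) (ll - lam k))
          + 1 / 2 *
            Gform A B β σ1 σ2 τ s (fun i => x k i - x (k+1) i)
              (fun j => y k j - y (k+1) j) (lam k - tl) := by
  intro k
  dsimp only
  intro xx yy ll hxx hyy
  have hx := Lag_blockwise_step_inequality A B c f g β σ1 (x k) (x (k+1)) xx (y k) (lam k) X
    (fun i => (hf i).subset (Set.subset_univ _) (hXcv i)) (hxmin k) hxx
  have hy := Lag_blockwise_step_inequality B A c g f β σ2 (y k) (y (k+1)) yy (x (k+1)) (lamh k) Y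
    (fun j => (hg j).subset (Set.subset_univ _) (hYcv j))
    (fun j => ⟨(hymin k j).1, fun z hz => by
      simpa only [Lag_comm A B] using (hymin k j).2 z hz⟩) hyy
  rw [add_comm (sA B (y (k+1)))] at hy
  have hcoup := coupling_three_point hβ.ne' hτs.ne' (sA B yy) (sA B (y k)) (sA B (y (k+1))) ll
    (hlamh k) (hlam k) (by abel)
  have hxH := HyInner_three_point A β σ1 xx (x k) (x (k+1))
  have hyH := HyInner_three_point B β σ2 yy (y k) (y (k+1))
  rw [Hform_eq, Hform_eq, Gform_eq, sum_inner_neg_mv_transpose, sum_inner_neg_mv_transpose,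
    sub_sub_cancel]
  simp only [sA_sub]
  rw [show sA A xx + sA B yy - c = (sA A xx - sA A (x (k+1))) + (sA B yy - sA B (y (k+1)))
      + (sA A (x (k+1)) + sA B (y (k+1)) - c) by abel, inner_skew_cancel]
  rw [inner_sub_right] at hcoup
  linarith

/-- key contraction inequality of GS-ADMM:
`h(u) − h(ũ^k) + ⟨w − w̃^k, J(w)⟩ ≥ (1/2)(‖w − w^{k+1}‖_H² − ‖w − w^k‖_H²) + (1/2)‖w^k − w̃^k‖_G²`. -/
theorem stmt6
    {p q n : ℕ} (hp : 1 ≤ p) (hq : 1 ≤ q)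
    {m : Fin p → ℕ} {d : Fin q → ℕ}
    (A : ∀ i, Matrix (Fin n) (Fin (m i)) ℝ)
    (B : ∀ j, Matrix (Fin n) (Fin (d j)) ℝ)
    (hA : ∀ i, LinearIndependent ℝ (fun l => (A i)ᵀ l))
    (hB : ∀ j, LinearIndependent ℝ (fun l => (B j)ᵀ l))
    (c : EuclideanSpace ℝ (Fin n))
    (X : ∀ i, Set (EuclideanSpace ℝ (Fin (m i))))
    (Y : ∀ j, Set (EuclideanSpace ℝ (Fin (d j))))
    (hXne : ∀ i, (X i).Nonempty) (hXcl : ∀ i, IsClosed (X i)) (hXcv : ∀ i, Convex ℝ (X i))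
    (hYne : ∀ j, (Y j).Nonempty) (hYcl : ∀ j, IsClosed (Y j)) (hYcv : ∀ j, Convex ℝ (Y j))
    (f : ∀ i, EuclideanSpace ℝ (Fin (m i)) → ℝ)
    (g : ∀ j, EuclideanSpace ℝ (Fin (d j)) → ℝ)
    (hf : ∀ i, ConvexOn ℝ Set.univ (f i))
    (hg : ∀ j, ConvexOn ℝ Set.univ (g j))
    (β σ1 σ2 τ s : ℝ) (hβ : 0 < β)
    (x : ℕ → ∀ i, EuclideanSpace ℝ (Fin (m i)))
    (y : ℕ → ∀ j, EuclideanSpace ℝ (Fin (d j)))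
    (lam lamh : ℕ → EuclideanSpace ℝ (Fin n))
    (hxmin : ∀ k i, x (k+1) i ∈ X i ∧ ∀ z ∈ X i,
      Lag A B c f g β (Function.update (x k) i (x (k+1) i)) (y k) (lam k)
          + σ1 * β / 2 * ‖mv (A i) (x (k+1) i - x k i)‖ ^ 2
        ≤ Lag A B c f g β (Function.update (x k) i z) (y k) (lam k)
          + σ1 * β / 2 * ‖mv (A i) (z - x k i)‖ ^ 2)
    (hlamh : ∀ k, lamh k = lam k - (τ * β) • (sA A (x (k+1)) + sA B (y k) - c))
    (hymin : ∀ k j, y (k+1) j ∈ Y j ∧ ∀ z ∈ Y j,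
      Lag A B c f g β (x (k+1)) (Function.update (y k) j (y (k+1) j)) (lamh k)
          + σ2 * β / 2 * ‖mv (B j) (y (k+1) j - y k j)‖ ^ 2
        ≤ Lag A B c f g β (x (k+1)) (Function.update (y k) j z) (lamh k)
          + σ2 * β / 2 * ‖mv (B j) (z - y k j)‖ ^ 2)
    (hlam : ∀ k, lam (k+1) = lamh k - (s * β) • (sA A (x (k+1)) + sA B (y (k+1)) - c))
    (hτs : 0 < τ + s) :
    ∀ k : ℕ,
      let tl : EuclideanSpace ℝ (Fin n) :=
        lam k - β • (sA A (x (k+1)) + sA B (y k) - c);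
      ∀ (xx : ∀ i, EuclideanSpace ℝ (Fin (m i)))
        (yy : ∀ j, EuclideanSpace ℝ (Fin (d j)))
        (ll : EuclideanSpace ℝ (Fin n)),
        (∀ i, xx i ∈ X i) → (∀ j, yy j ∈ Y j) →
        (∑ i, f i (xx i)) + (∑ j, g j (yy j))
            - ((∑ i, f i (x (k+1) i)) + (∑ j, g j (y (k+1) j)))
          + ((∑ i, ⟪xx i - x (k+1) i, -(mv (A i)ᵀ ll)⟫)
            + (∑ j, ⟪yy j - y (k+1) j, -(mv (B j)ᵀ ll)⟫)
            + ⟪ll - tl, sA A xx + sA B yy - c⟫)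
        ≥ 1 / 2 *
            (Hform A B β σ1 σ2 τ s (fun i => xx i - x (k+1) i)
                (fun j => yy j - y (k+1) j) (ll - lam (k+1))
              - Hform A B β σ1 σ2 τ s (fun i => xx i - x k i)
                (fun j => yy j - y k j) (ll - lam k))
          + 1 / 2 *
            Gform A B β σ1 σ2 τ s (fun i => x k i - x (k+1) i)
              (fun j => y k j - y (k+1) j) (lam k - tl) :=
  stmt6_general A B c X Y hXcv hYcv f g hf hg β σ1 σ2 τ s hβ x y lam lamh hxmin hlamh hymin hlam hτs
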